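/- The greedy bin-packing algorithm Binpack, which inserts each list of identifiers (each list having length at most p) one identifier at a time into the lowest-indexed non-full bin of capacity p, places every list entirely within at most two consecutive bins: if i is the smallest index of a bin containing an identifier of list L, then all identifiers of L lie in bins i and i+1. -/

import Mathlib

/-!
Greedy filling is monotone: once a bin is skipped it is full, so later items never return to it.
Hence every item before `s` lies in a bin `≤ bin s`. If some later item `j < s + p` went to a bin
beyond `bin s + 1`, both bins `bin s` and `bin s + 1` would be full before `j`, i.e. hold `2p`
items; fewer than `p` of these precede `s`, so more than `p` lie in `[s, j)`, which is too short.
-/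

/-- `bin` is a greedy assignment of sequentially inserted items to bins of capacity `p`:
each item goes to the lowest-indexed non-full bin. -/
def IsGreedy (p : ℕ) (bin : ℕ → ℕ) : Prop :=
  ∀ j : ℕ, ((Finset.range j).filter (fun j' => bin j' = bin j)).card < p ∧
    ∀ b < bin j, ((Finset.range j).filter (fun j' => bin j' = b)).card = p

open Finset

lemma card_filter_range_le_add {q : ℕ → Prop} [DecidablePred q] {s j : ℕ} (hsj : s ≤ j) :
    #{i ∈ range j | q i} ≤ #{i ∈ range s | q i} + (j - s) := by
  simp only [← Nat.count_eq_card_filter_range]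
  obtain ⟨d, rfl⟩ := Nat.exists_eq_add_of_le hsj
  rw [Nat.count_add, Nat.add_sub_cancel_left]
  exact Nat.add_le_add_left (Nat.count_le _) _

namespace IsGreedy

variable {p : ℕ} {bin : ℕ → ℕ}

lemma monotone (hg : IsGreedy p bin) : Monotone bin := by
  intro a b hab
  by_contra! h
  have full_before_a := (hg a).2 (bin b) h
  have := card_le_card (filter_subset_filter (fun i => bin i = bin b) (range_subset_range.2 hab))
  have := (hg b).1
  omega

lemma card_filter_range_two_bins_eq_two_mul (hg : IsGreedy p bin) {c j : ℕ} (h : c + 1 < bin j) :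
    #{i ∈ range j | bin i = c ∨ bin i = c + 1} = 2 * p := by
  rw [filter_or, card_union_of_disjoint (disjoint_filter.2 fun _ _ _ => by omega),
    (hg j).2 c (by omega), (hg j).2 (c + 1) h]
  ring

lemma le_succ_of_lt_add (hg : IsGreedy p bin) {s j : ℕ} (hj : j < s + p) :
    bin j ≤ bin s + 1 := by
  by_contra! h
  have hsj : s ≤ j := by
    by_contra! hjs
    have := hg.monotone hjs.le
    omega
  have full := hg.card_filter_range_two_bins_eq_two_mul h
  have before : #{i ∈ range s | bin i = bin s ∨ bin i = bin s + 1} < p := by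
    rw [filter_congr fun i hi => by
      have := hg.monotone (mem_range.1 hi).le
      exact or_iff_left (by omega)]
    exact (hg s).1
  have := card_filter_range_le_add (q := fun i => bin i = bin s ∨ bin i = bin s + 1) hsj
  omega

end IsGreedy

/-- A list of length `ℓ` is inserted as the consecutive items `s, s+1, …, s+ℓ-1`. -/
theorem binpack_two_consecutive_bins_general (p : ℕ) (bin : ℕ → ℕ)
    (hg : IsGreedy p bin) (s ℓ : ℕ) (hℓ : ℓ ≤ p) :
    ∀ j, s ≤ j → j < s + ℓ → bin s ≤ bin j ∧ (bin j = bin s ∨ bin j = bin s + 1) := by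
  intro j hsj hj
  have lower := hg.monotone hsj
  have upper := hg.le_succ_of_lt_add (show j < s + p by omega)
  omega

/-- Binpack places every list (of length `ℓ ≤ p`, inserted as the consecutive items
`s, s+1, …, s+ℓ-1`) entirely within the two consecutive bins `bin s` and `bin s + 1`,
where `bin s` is the smallest index of a bin containing an identifier of the list. -/
theorem binpack_two_consecutive_bins (p : ℕ) (hp : 0 < p) (bin : ℕ → ℕ)
    (hg : IsGreedy p bin) (s ℓ : ℕ) (hℓ : ℓ ≤ p) :
    ∀ j, s ≤ j → j < s + ℓ → bin s ≤ bin j ∧ (bin j = bin s ∨ bin j = bin s + 1) :=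
  binpack_two_consecutive_bins_general p bin hg s ℓ hℓ
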